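/- arXiv:2301.13585 — 3 statements merged into one kernel-verified Lean document; each statement's English description precedes it below -/
import Mathlib

section
/- In the setting of the bias–variance decomposition with modified input X_a satisfying (X_a ⟂⟂ Y)|X and E[X_a|X] = H^{-1}X for an invertible matrix H: if the smallest eigenvalue of Γ = E[(X_a − E[X_a|X])(X_a − E[X_a|X])ᵀ] is at least μ > 0, and θ_a* minimizes R_a(θ) = E[(Y − θᵀX_a)²], then ‖θ_a*‖₂² ≤ B_a/μ, where B_a = inf_θ R_a(θ) − inf_θ E[(Y − θᵀX)²]. -/
/-!
Write `Y - θ ⬝ Xa = (Y - θ ⬝ H⁻¹X) - θ ⬝ (Xa - H⁻¹X)`. Since `H⁻¹X = E[Xa | X]`, the residual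
`Xa - H⁻¹X` is orthogonal in `L²` to every square-integrable function of `X`, and, by the
conditional independence of `Xa` and `Y` given `X`, also to `Y`. Pythagoras then gives
`R_a(θ) = R(H⁻ᵀθ) + θᵀΓθ ≥ inf R + μ ‖θ‖²`.
-/

open MeasureTheory ProbabilityTheory Matrix

theorem ProbabilityTheory.Kernel.IndepFun.ae_indepFun {α Ω : Type*} {mα : MeasurableSpace α}
    {mΩ : MeasurableSpace Ω} {κ : Kernel α Ω} [IsMarkovKernel κ] {ν : Measure α} {f g : Ω → ℝ}
    (hf : Measurable f) (hg : Measurable g) (h : Kernel.IndepFun f g κ ν) :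
    ∀ᵐ a ∂ν, ProbabilityTheory.IndepFun f g (κ a) := by
  -- independence only has to be checked on the countable π-systems `{f ⁻¹' Iic q | q : ℚ}`
  let π (φ : Ω → ℝ) : Set (Set Ω) := Set.preimage φ '' ⋃ q : ℚ, {Set.Iic (q : ℝ)}
  have hgen (φ : Ω → ℝ) : MeasurableSpace.comap φ inferInstance = .generateFrom (π φ) := by
    rw [BorelSpace.measurable_eq (α := ℝ), Real.borel_eq_generateFrom_Iic_rat,
      MeasurableSpace.comap_generateFrom]
  have hπ (φ : Ω → ℝ) : IsPiSystem (π φ) := Real.isPiSystem_Iic_rat.comap φ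
  have hIic : ∀ᵐ a ∂ν, ∀ q r : ℚ, κ a (f ⁻¹' Set.Iic (q : ℝ) ∩ g ⁻¹' Set.Iic (r : ℝ))
      = κ a (f ⁻¹' Set.Iic (q : ℝ)) * κ a (g ⁻¹' Set.Iic (r : ℝ)) :=
    ae_all_iff.2 fun q => ae_all_iff.2 fun r =>
      Kernel.indepFun_iff_measure_inter_preimage_eq_mul.1 h _ _ measurableSet_Iic measurableSet_Iic
  filter_upwards [hIic] with a ha
  refine ProbabilityTheory.IndepSets.indep hf.comap_le hg.comap_le (hπ f) (hπ g)
    (hgen f) (hgen g) ?_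
  rw [ProbabilityTheory.IndepSets_iff]
  rintro _ _ ⟨_, hs, rfl⟩ ⟨_, ht, rfl⟩
  simp only [Set.mem_iUnion, Set.mem_singleton_iff] at hs ht
  obtain ⟨q, rfl⟩ := hs
  obtain ⟨r, rfl⟩ := ht
  exact ha q r

section CondExp

variable {Ω : Type*} {m mΩ : MeasurableSpace Ω} {μ : Measure Ω}

theorem integral_mul_condExp_of_stronglyMeasurable (hm : m ≤ mΩ) [SigmaFinite (μ.trim hm)]
    {w f : Ω → ℝ} (hw : StronglyMeasurable[m] w) (hwf : Integrable (w * f) μ)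
    (hf : Integrable f μ) : ∫ ω, w ω * (μ[f|m]) ω ∂μ = ∫ ω, w ω * f ω ∂μ :=
  calc ∫ ω, w ω * (μ[f|m]) ω ∂μ = ∫ ω, (μ[w * f|m]) ω ∂μ :=
        integral_congr_ae (condExp_mul_of_stronglyMeasurable_left hw hwf hf).symm
    _ = ∫ ω, w ω * f ω ∂μ := integral_condExp hm

variable [StandardBorelSpace Ω] [IsFiniteMeasure μ]

theorem condExp_mul_ae_eq_of_condIndepFun (hm : m ≤ mΩ) {f g : Ω → ℝ} (hf : Measurable f)
    (hg : Measurable g) (hfg : CondIndepFun m hm f g μ) (hfi : Integrable f μ)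
    (hgi : Integrable g μ) (hfgi : Integrable (f * g) μ) :
    μ[f * g|m] =ᵐ[μ] μ[f|m] * μ[g|m] := by
  filter_upwards [condExp_ae_eq_integral_condExpKernel hm hfgi,
    condExp_ae_eq_integral_condExpKernel hm hfi, condExp_ae_eq_integral_condExpKernel hm hgi,
    ae_of_ae_trim hm (hfg.ae_indepFun hf hg)] with ω hfgω hfω hgω hindep
  rw [hfgω, Pi.mul_apply, hfω, hgω]
  exact hindep.integral_mul_eq_mul_integral hf.aestronglyMeasurable hg.aestronglyMeasurable

theorem integral_condExp_mul_of_condIndepFun (hm : m ≤ mΩ) {f g : Ω → ℝ} (hf : Measurable f)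
    (hg : Measurable g) (hfg : CondIndepFun m hm f g μ) (hf2 : MemLp f 2 μ) (hg2 : MemLp g 2 μ) :
    ∫ ω, (μ[f|m]) ω * g ω ∂μ = ∫ ω, f ω * g ω ∂μ := by
  have hc2 : MemLp (μ[f|m]) 2 μ := hf2.condExp one_le_two
  calc ∫ ω, (μ[f|m]) ω * g ω ∂μ = ∫ ω, (μ[f|m]) ω * (μ[g|m]) ω ∂μ :=
        (integral_mul_condExp_of_stronglyMeasurable hm stronglyMeasurable_condExp
          (hc2.integrable_mul hg2) (hg2.integrable one_le_two)).symm
    _ = ∫ ω, (μ[f * g|m]) ω ∂μ := integral_congr_ae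
        (condExp_mul_ae_eq_of_condIndepFun hm hf hg hfg (hf2.integrable one_le_two)
          (hg2.integrable one_le_two) (hf2.integrable_mul hg2)).symm
    _ = ∫ ω, f ω * g ω ∂μ := integral_condExp hm

theorem integral_sub_mul_sub_eq_zero_of_condIndepFun (hm : m ≤ mΩ) {f g w h : Ω → ℝ}
    (hf : Measurable f) (hg : Measurable g)
    (hfg : CondIndepFun m hm f g μ) (hw : StronglyMeasurable[m] w) (hh : μ[f|m] =ᵐ[μ] h)
    (hf2 : MemLp f 2 μ) (hg2 : MemLp g 2 μ) (hw2 : MemLp w 2 μ) :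
    ∫ ω, (g ω - w ω) * (f ω - h ω) ∂μ = 0 := by
  have hc2 : MemLp (μ[f|m]) 2 μ := hf2.condExp one_le_two
  have hgf : ∫ ω, g ω * (μ[f|m]) ω ∂μ = ∫ ω, g ω * f ω ∂μ := by
    simpa only [mul_comm] using integral_condExp_mul_of_condIndepFun hm hf hg hfg hf2 hg2
  have hwf : ∫ ω, w ω * (μ[f|m]) ω ∂μ = ∫ ω, w ω * f ω ∂μ :=
    integral_mul_condExp_of_stronglyMeasurable hm hw (hw2.integrable_mul hf2)
      (hf2.integrable one_le_two)
  calc ∫ ω, (g ω - w ω) * (f ω - h ω) ∂μ = ∫ ω, (g ω - w ω) * (f ω - (μ[f|m]) ω) ∂μ := by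
        refine integral_congr_ae ?_
        filter_upwards [hh] with ω hω
        rw [hω]
    _ = (∫ ω, g ω * f ω ∂μ - ∫ ω, g ω * (μ[f|m]) ω ∂μ)
          - (∫ ω, w ω * f ω ∂μ - ∫ ω, w ω * (μ[f|m]) ω ∂μ) := by
        have hgf2 : Integrable (fun ω => g ω * f ω) μ := hg2.integrable_mul hf2
        have hgc2 : Integrable (fun ω => g ω * (μ[f|m]) ω) μ := hg2.integrable_mul hc2
        have hwf2 : Integrable (fun ω => w ω * f ω) μ := hw2.integrable_mul hf2
        have hwc2 : Integrable (fun ω => w ω * (μ[f|m]) ω) μ := hw2.integrable_mul hc2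
        have split := integral_sub (hgf2.sub hgc2) (hwf2.sub hwc2)
        simp only [Pi.sub_apply] at split
        rw [integral_sub hgf2 hgc2, integral_sub hwf2 hwc2] at split
        rw [← split]
        congr 1 with ω
        ring
    _ = 0 := by rw [hgf, hwf, sub_self, sub_self, sub_self]

end CondExp

section Quadratic

variable {Ω ι : Type*} {mΩ : MeasurableSpace Ω} {μ : Measure Ω} [Fintype ι]

theorem integral_sub_sq_eq_add_of_integral_mul_eq_zero {u v : Ω → ℝ} (hu : MemLp u 2 μ)
    (hv : MemLp v 2 μ) (huv : ∫ ω, u ω * v ω ∂μ = 0) :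
    ∫ ω, (u ω - v ω) ^ 2 ∂μ = ∫ ω, u ω ^ 2 ∂μ + ∫ ω, v ω ^ 2 ∂μ := by
  have expand : (fun ω => (u ω - v ω) ^ 2) = fun ω => u ω ^ 2 - 2 * (u ω * v ω) + v ω ^ 2 := by
    ext ω; ring
  have hu2 : Integrable (fun ω => u ω ^ 2) μ := hu.integrable_sq
  have huv2 : Integrable (fun ω => 2 * (u ω * v ω)) μ := (hu.integrable_mul hv).const_mul 2
  rw [expand, integral_add (f := fun ω => u ω ^ 2 - 2 * (u ω * v ω)) (hu2.sub huv2)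
    hv.integrable_sq, integral_sub hu2 huv2, integral_const_mul, huv, mul_zero, sub_zero]

theorem integral_mul_dotProduct_eq_zero {u : Ω → ℝ} {e : Ω → ι → ℝ}
    (hue : ∀ i, Integrable (fun ω => u ω * e ω i) μ) (h : ∀ i, ∫ ω, u ω * e ω i ∂μ = 0)
    (θ : ι → ℝ) : ∫ ω, u ω * (θ ⬝ᵥ e ω) ∂μ = 0 := by
  simp only [dotProduct, Finset.mul_sum, mul_left_comm (u _)]
  rw [integral_finsetSum _ fun i _ => (hue i).const_mul (θ i)]
  simp [integral_const_mul, h]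

theorem integral_dotProduct_sq {e : Ω → ι → ℝ} (he : ∀ i, MemLp (fun ω => e ω i) 2 μ)
    (θ : ι → ℝ) :
    ∫ ω, (θ ⬝ᵥ e ω) ^ 2 ∂μ = θ ⬝ᵥ (of fun i j => ∫ ω, e ω i * e ω j ∂μ) *ᵥ θ := by
  have hint (i j : ι) : Integrable (fun ω => e ω i * e ω j) μ := (he i).integrable_mul (he j)
  have expand : (fun ω => (θ ⬝ᵥ e ω) ^ 2)
      = fun ω => ∑ i, ∑ j, θ i * θ j * (e ω i * e ω j) := by
    ext ω
    simp only [sq, dotProduct, Finset.sum_mul_sum]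
    exact Finset.sum_congr rfl fun i _ => Finset.sum_congr rfl fun j _ => by ring
  rw [expand, integral_finsetSum _ fun i _ => integrable_finsetSum _ fun j _ =>
    (hint i j).const_mul _]
  simp only [dotProduct, mulVec, of_apply, Finset.mul_sum]
  refine Finset.sum_congr rfl fun i _ => ?_
  rw [integral_finsetSum _ fun j _ => (hint i j).const_mul _]
  exact Finset.sum_congr rfl fun j _ => by rw [integral_const_mul]; ring

end Quadratic

theorem integral_sq_sub_dotProduct_eq_add_quadForm {Ω ι : Type*} {m mΩ : MeasurableSpace Ω}
    [StandardBorelSpace Ω] {μ : Measure Ω} [IsFiniteMeasure μ] [Fintype ι] (hm : m ≤ mΩ)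
    {Xa V : Ω → ι → ℝ} {Y : Ω → ℝ} (hXa : Measurable Xa) (hY : Measurable Y)
    (hXa2 : ∀ j, MemLp (fun ω => Xa ω j) 2 μ) (hY2 : MemLp Y 2 μ)
    (hci : CondIndepFun m hm Xa Y μ) (hV : Measurable[m] V)
    (hcond : ∀ j, μ[fun ω => Xa ω j|m] =ᵐ[μ] fun ω => V ω j) (θ : ι → ℝ) :
    ∫ ω, (Y ω - θ ⬝ᵥ Xa ω) ^ 2 ∂μ = ∫ ω, (Y ω - θ ⬝ᵥ V ω) ^ 2 ∂μ
      + θ ⬝ᵥ (of fun i j => ∫ ω, (Xa ω i - V ω i) * (Xa ω j - V ω j) ∂μ) *ᵥ θ := by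
  have hV2 (j : ι) : MemLp (fun ω => V ω j) 2 μ :=
    ((hXa2 j).condExp one_le_two).ae_eq (hcond j)
  have he2 (j : ι) : MemLp (fun ω => Xa ω j - V ω j) 2 μ := (hXa2 j).sub (hV2 j)
  have hθV : StronglyMeasurable[m] fun ω => θ ⬝ᵥ V ω :=
    (Finset.measurable_sum _ fun j _ =>
      measurable_const.mul ((measurable_pi_apply j).comp hV)).stronglyMeasurable
  have hθV2 : MemLp (fun ω => θ ⬝ᵥ V ω) 2 μ :=
    memLp_finsetSum _ fun j _ => (hV2 j).const_mul (θ j)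
  have hu2 : MemLp (fun ω => Y ω - θ ⬝ᵥ V ω) 2 μ := hY2.sub hθV2
  have horth (j : ι) : ∫ ω, (Y ω - θ ⬝ᵥ V ω) * (Xa ω j - V ω j) ∂μ = 0 :=
    integral_sub_mul_sub_eq_zero_of_condIndepFun hm ((measurable_pi_apply j).comp hXa) hY
      (hci.comp (measurable_pi_apply j) measurable_id) hθV (hcond j) (hXa2 j) hY2 hθV2
  calc ∫ ω, (Y ω - θ ⬝ᵥ Xa ω) ^ 2 ∂μ
      = ∫ ω, ((Y ω - θ ⬝ᵥ V ω) - θ ⬝ᵥ (Xa ω - V ω)) ^ 2 ∂μ := by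
        simp only [dotProduct_sub, sub_sub_sub_cancel_right]
    _ = ∫ ω, (Y ω - θ ⬝ᵥ V ω) ^ 2 ∂μ + ∫ ω, (θ ⬝ᵥ (Xa ω - V ω)) ^ 2 ∂μ :=
        integral_sub_sq_eq_add_of_integral_mul_eq_zero hu2
          (memLp_finsetSum _ fun j _ => (he2 j).const_mul (θ j))
          (integral_mul_dotProduct_eq_zero (fun j => hu2.integrable_mul (he2 j)) horth θ)
    _ = _ := congrArg _ (integral_dotProduct_sq he2 θ)

theorem stmt10_general {Ω : Type*} {mΩ : MeasurableSpace Ω} [StandardBorelSpace Ω]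
    (μ : Measure Ω) [IsProbabilityMeasure μ]
    {d : ℕ} (X Xa : Ω → Fin d → ℝ) (Y : Ω → ℝ)
    (hXam : Measurable Xa) (hYm : Measurable Y)
    (hXa2 : ∀ j, MemLp (fun ω => Xa ω j) 2 μ) (hY2 : MemLp Y 2 μ)
    (mX : MeasurableSpace Ω) (hmXdef : mX = MeasurableSpace.comap X inferInstance)
    (hmX : mX ≤ mΩ)
    (hci : CondIndepFun mX hmX Xa Y μ)
    (H : Matrix (Fin d) (Fin d) ℝ)
    (hcond : ∀ j, (μ[fun ω => Xa ω j | mX]) =ᵐ[μ] fun ω => H⁻¹.mulVec (X ω) j)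
    (Γ : Matrix (Fin d) (Fin d) ℝ)
    (hΓ : Γ = Matrix.of fun i j =>
      ∫ ω, (Xa ω i - H⁻¹.mulVec (X ω) i) * (Xa ω j - H⁻¹.mulVec (X ω) j) ∂μ)
    (μ0 : ℝ) (hμ0 : 0 < μ0)
    (hΓmin : ∀ θ : Fin d → ℝ, μ0 * ∑ j, θ j ^ 2 ≤ θ ⬝ᵥ Γ.mulVec θ)
    (Ra R : (Fin d → ℝ) → ℝ)
    (hRa : ∀ θ, Ra θ = ∫ ω, (Y ω - ∑ j, θ j * Xa ω j) ^ 2 ∂μ)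
    (hR : ∀ θ, R θ = ∫ ω, (Y ω - ∑ j, θ j * X ω j) ^ 2 ∂μ)
    (θa : Fin d → ℝ)
    (θs : Fin d → ℝ) (hθs : ∀ θ, R θs ≤ R θ) :
    ∑ j, θa j ^ 2 ≤ (Ra θa - R θs) / μ0 := by
  have hV : Measurable[mX] fun ω => H⁻¹ *ᵥ X ω := by
    subst hmXdef
    exact (Continuous.matrix_mulVec continuous_const continuous_id).measurable.comp
      (comap_measurable X)
  have hdecomp : Ra θa = R (θa ᵥ* H⁻¹) + θa ⬝ᵥ Γ *ᵥ θa := by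
    have hRH : R (θa ᵥ* H⁻¹) = ∫ ω, (Y ω - θa ⬝ᵥ (H⁻¹ *ᵥ X ω)) ^ 2 ∂μ := by
      simp only [hR, dotProduct_mulVec]
      rfl
    rw [hRa, hRH, hΓ]
    exact integral_sq_sub_dotProduct_eq_add_quadForm hmX hXam hYm hXa2 hY2 hci hV hcond θa
  rw [le_div_iff₀ hμ0]
  linarith [hθs (θa ᵥ* H⁻¹), hΓmin θa]

theorem stmt10 {Ω : Type*} {mΩ : MeasurableSpace Ω} [StandardBorelSpace Ω]
    (μ : Measure Ω) [IsProbabilityMeasure μ]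
    {d : ℕ} (X Xa : Ω → Fin d → ℝ) (Y : Ω → ℝ)
    (hXm : Measurable X) (hXam : Measurable Xa) (hYm : Measurable Y)
    (hX2 : ∀ j, MemLp (fun ω => X ω j) 2 μ)
    (hXa2 : ∀ j, MemLp (fun ω => Xa ω j) 2 μ) (hY2 : MemLp Y 2 μ)
    (mX : MeasurableSpace Ω) (hmXdef : mX = MeasurableSpace.comap X inferInstance)
    (hmX : mX ≤ mΩ)
    (hci : CondIndepFun mX hmX Xa Y μ)
    (H : Matrix (Fin d) (Fin d) ℝ) (hH : IsUnit H.det)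
    (hcond : ∀ j, (μ[fun ω => Xa ω j | mX]) =ᵐ[μ] fun ω => H⁻¹.mulVec (X ω) j)
    (Γ : Matrix (Fin d) (Fin d) ℝ)
    (hΓ : Γ = Matrix.of fun i j =>
      ∫ ω, (Xa ω i - H⁻¹.mulVec (X ω) i) * (Xa ω j - H⁻¹.mulVec (X ω) j) ∂μ)
    (μ0 : ℝ) (hμ0 : 0 < μ0)
    (hΓmin : ∀ θ : Fin d → ℝ, μ0 * ∑ j, θ j ^ 2 ≤ θ ⬝ᵥ Γ.mulVec θ)
    (Ra R : (Fin d → ℝ) → ℝ)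
    (hRa : ∀ θ, Ra θ = ∫ ω, (Y ω - ∑ j, θ j * Xa ω j) ^ 2 ∂μ)
    (hR : ∀ θ, R θ = ∫ ω, (Y ω - ∑ j, θ j * X ω j) ^ 2 ∂μ)
    (θa : Fin d → ℝ) (hθa : ∀ θ, Ra θa ≤ Ra θ)
    (θs : Fin d → ℝ) (hθs : ∀ θ, R θs ≤ R θ) :
    ∑ j, θa j ^ 2 ≤ (Ra θa - R θs) / μ0 :=
  stmt10_general μ X Xa Y hXam hYm hXa2 hY2 mX hmXdef hmX hci H hcond Γ hΓ μ0 hμ0 hΓmin Ra R hRa hR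
    θa θs hθs
end

section
/- Under MCAR missing data with mask covariance matrix V invertible and E[X_j²] ≥ ℓ² for all j, the minimizer θ_imp* of the imputed risk R_imp(θ) = E[(Y − θᵀ(P⊙X))²] satisfies ‖θ_imp*‖₂² ≤ B_imp / (ℓ² λ_min(V)), where B_imp = inf_θ R_imp(θ) − inf_θ R(θ) and λ_min(V) is the smallest eigenvalue of V. -/
/-!
Write `P = ρ + (P - ρ)` with `ρ = E P`. The imputed residual at `θ` is the complete-data residual
at `ρ ⊙ θ` minus the noise `(P - ρ) ⬝ᵥ (θ ⊙ X)`. The noise is centred and independent of `(X, Y)`,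
so the cross term vanishes and its second moment is `E[(θ ⊙ X)ᵀ V (θ ⊙ X)]`, which is at least
`λ_min(V) ∑ θⱼ² E[Xⱼ²] ≥ ℓ² λ_min(V) ‖θ‖²`. Hence
`R_imp(θ) ≥ R(ρ ⊙ θ) + ℓ² λ_min(V) ‖θ‖² ≥ inf R + ℓ² λ_min(V) ‖θ‖²` for every `θ`.
-/

open MeasureTheory ProbabilityTheory Matrix
open scoped ENNReal

open scoped MatrixOrder in
lemma Matrix.IsHermitian.iInf_eigenvalues_mul_dotProduct_self_le {n : Type*} [Fintype n]
    [DecidableEq n] {A : Matrix n n ℝ} (hA : A.IsHermitian) (x : n → ℝ) :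
    (⨅ i, hA.eigenvalues i) * (x ⬝ᵥ x) ≤ x ⬝ᵥ A *ᵥ x := by
  have hle : algebraMap ℝ (Matrix n n ℝ) (⨅ i, hA.eigenvalues i) ≤ A := by
    rw [algebraMap_le_iff_le_spectrum (R := ℝ) hA.isSelfAdjoint,
      hA.spectrum_real_eq_range_eigenvalues]
    rintro _ ⟨i, rfl⟩
    exact ciInf_le (Set.finite_range _).bddBelow i
  simpa [Algebra.algebraMap_eq_smul_one, sub_mulVec, smul_mulVec, dotProduct_sub] using
    (Matrix.le_iff.mp hle).dotProduct_mulVec_nonneg x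

lemma Matrix.PosDef.iInf_eigenvalues_pos {n : Type*} [Fintype n] [DecidableEq n] [Nonempty n]
    {A : Matrix n n ℝ} (hA : A.PosDef) : 0 < ⨅ i, hA.1.eigenvalues i := by
  obtain ⟨i, hi⟩ := exists_eq_ciInf_of_finite (f := hA.1.eigenvalues)
  exact hi ▸ hA.eigenvalues_pos i

lemma Matrix.dotProduct_mulVec_eq_sum_sum {n : Type*} [Fintype n] (A : Matrix n n ℝ)
    (x : n → ℝ) : x ⬝ᵥ A *ᵥ x = ∑ j, ∑ k, A j k * (x j * x k) := by
  simp only [dotProduct, mulVec, Finset.mul_sum]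
  exact Finset.sum_congr rfl fun j _ => Finset.sum_congr rfl fun k _ => by ring

section

variable {Ω ι : Type*} {mΩ : MeasurableSpace Ω} {μ : Measure Ω} [Fintype ι]

lemma integral_sub_sq {f g : Ω → ℝ} (hf : MemLp f 2 μ) (hg : MemLp g 2 μ) :
    ∫ ω, (f ω - g ω) ^ 2 ∂μ
      = ∫ ω, f ω ^ 2 ∂μ - 2 * ∫ ω, f ω * g ω ∂μ + ∫ ω, g ω ^ 2 ∂μ := by
  have hfg : Integrable (fun ω => 2 * (f ω * g ω)) μ := (hf.integrable_mul hg).const_mul 2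
  have hf2 : Integrable (fun ω => f ω ^ 2) μ := hf.integrable_sq
  have hg2 : Integrable (fun ω => g ω ^ 2) μ := hg.integrable_sq
  simp_rw [show ∀ ω, (f ω - g ω) ^ 2 = f ω ^ 2 - 2 * (f ω * g ω) + g ω ^ 2 from fun ω => by ring]
  rw [integral_add (f := fun ω => f ω ^ 2 - 2 * (f ω * g ω)) (hf2.sub hfg) hg2,
    integral_sub hf2 hfg, integral_const_mul]

lemma integrable_dotProduct_mulVec (A : Matrix ι ι ℝ) {u : Ω → ι → ℝ}
    (hu : ∀ j, MemLp (fun ω => u ω j) 2 μ) :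
    Integrable (fun ω => u ω ⬝ᵥ A *ᵥ u ω) μ := by
  simp_rw [dotProduct_mulVec_eq_sum_sum]
  exact integrable_finsetSum _ fun j _ => integrable_finsetSum _ fun k _ =>
    ((hu j).integrable_mul (hu k)).const_mul _

lemma integral_dotProduct_mulVec (A : Matrix ι ι ℝ) {u : Ω → ι → ℝ}
    (hu : ∀ j, MemLp (fun ω => u ω j) 2 μ) :
    ∫ ω, u ω ⬝ᵥ A *ᵥ u ω ∂μ = ∑ j, ∑ k, A j k * ∫ ω, u ω j * u ω k ∂μ := by
  simp_rw [dotProduct_mulVec_eq_sum_sum]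
  have huu : ∀ j k, Integrable (fun ω => u ω j * u ω k) μ := fun j k =>
    (hu j).integrable_mul (hu k)
  rw [integral_finsetSum (f := fun j ω => ∑ k, A j k * (u ω j * u ω k)) _
    fun j _ => integrable_finsetSum _ fun k _ => (huu j k).const_mul _]
  refine Finset.sum_congr rfl fun j _ => ?_
  rw [integral_finsetSum (f := fun k ω => A j k * (u ω j * u ω k)) _
    fun k _ => (huu j k).const_mul _]
  simp_rw [integral_const_mul]

lemma integral_dotProduct_of_indepFun {κ : Type*} [Fintype κ] {a g : Ω → κ → ℝ}
    (hind : IndepFun g a μ) (ha : ∀ i, MemLp (fun ω => a ω i) ∞ μ)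
    (hg : ∀ i, Integrable (fun ω => g ω i) μ) :
    ∫ ω, a ω ⬝ᵥ g ω ∂μ = ∑ i, (∫ ω, a ω i ∂μ) * ∫ ω, g ω i ∂μ := by
  simp only [dotProduct]
  rw [integral_finsetSum (f := fun i ω => a ω i * g ω i) _ fun i _ =>
    (hg i).mul_of_top_right (ha i)]
  exact Finset.sum_congr rfl fun i _ =>
    (hind.comp (measurable_pi_apply i) (measurable_pi_apply i)).symm.integral_mul_eq_mul_integral
      (ha i).1 (hg i).1

lemma integral_mul_dotProduct_eq_zero_of_indepFun {Z : Ω → ℝ} {u D : Ω → ι → ℝ}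
    (hind : IndepFun (fun ω => (Z ω, u ω)) D μ) (hZ : MemLp Z 2 μ)
    (hu : ∀ j, MemLp (fun ω => u ω j) 2 μ) (hD : ∀ j, MemLp (fun ω => D ω j) ∞ μ)
    (hD0 : ∀ j, ∫ ω, D ω j ∂μ = 0) :
    ∫ ω, Z ω * (D ω ⬝ᵥ u ω) ∂μ = 0 := by
  have hsmul : ∀ ω, Z ω * (D ω ⬝ᵥ u ω) = D ω ⬝ᵥ (Z ω • u ω) := fun ω => by
    rw [dotProduct_smul, smul_eq_mul]
  have hind' : IndepFun (fun ω => Z ω • u ω) D μ :=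
    hind.comp (φ := fun p : ℝ × (ι → ℝ) => p.1 • p.2) (by fun_prop) measurable_id
  simp_rw [hsmul]
  rw [integral_dotProduct_of_indepFun hind' hD fun j => hZ.integrable_mul (hu j)]
  simp [hD0]

lemma integral_dotProduct_sq_of_indepFun {u D : Ω → ι → ℝ} (hind : IndepFun u D μ)
    (hu : ∀ j, MemLp (fun ω => u ω j) 2 μ) (hD : ∀ j, MemLp (fun ω => D ω j) ∞ μ) :
    ∫ ω, (D ω ⬝ᵥ u ω) ^ 2 ∂μ
      = ∑ j, ∑ k, (∫ ω, D ω j * D ω k ∂μ) * ∫ ω, u ω j * u ω k ∂μ := by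
  let pairProd : (ι → ℝ) → ι × ι → ℝ := fun x p => x p.1 * x p.2
  have hsq : ∀ ω, (D ω ⬝ᵥ u ω) ^ 2 = pairProd (D ω) ⬝ᵥ pairProd (u ω) := fun ω => by
    simp only [sq, dotProduct, Finset.sum_mul_sum, Fintype.sum_prod_type, pairProd]
    exact Finset.sum_congr rfl fun j _ => Finset.sum_congr rfl fun k _ => by ring
  have hpair : Measurable pairProd := by fun_prop
  have hind' : IndepFun (fun ω => pairProd (u ω)) (fun ω => pairProd (D ω)) μ :=
    hind.comp hpair hpair
  simp_rw [hsq]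
  rw [integral_dotProduct_of_indepFun hind' (fun p => (hD p.2).mul (hD p.1))
    fun p => (hu p.1).integrable_mul (hu p.2), Fintype.sum_prod_type]

lemma integral_sub_dotProduct_sq_of_indepFun {Z : Ω → ℝ} {u D : Ω → ι → ℝ}
    (hind : IndepFun (fun ω => (Z ω, u ω)) D μ) (hZ : MemLp Z 2 μ)
    (hu : ∀ j, MemLp (fun ω => u ω j) 2 μ) (hD : ∀ j, MemLp (fun ω => D ω j) ∞ μ)
    (hD0 : ∀ j, ∫ ω, D ω j ∂μ = 0) :
    ∫ ω, (Z ω - D ω ⬝ᵥ u ω) ^ 2 ∂μ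
      = ∫ ω, Z ω ^ 2 ∂μ
        + ∫ ω, u ω ⬝ᵥ (Matrix.of fun j k => ∫ ω, D ω j * D ω k ∂μ) *ᵥ u ω ∂μ := by
  have hW : MemLp (fun ω => D ω ⬝ᵥ u ω) 2 μ :=
    memLp_finsetSum _ fun j _ => (hu j).mul (hD j)
  have hind' : IndepFun u D μ := hind.comp measurable_snd measurable_id
  rw [integral_sub_sq hZ hW, integral_mul_dotProduct_eq_zero_of_indepFun hind hZ hu hD hD0,
    integral_dotProduct_sq_of_indepFun hind' hu hD,
    integral_dotProduct_mulVec _ hu]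
  simp

lemma integral_sq_sub_masked_eq [IsProbabilityMeasure μ] {X : Ω → ι → ℝ} {Y : Ω → ℝ}
    {P : Ω → ι → ℝ} (hX2 : ∀ j, MemLp (fun ω => X ω j) 2 μ) (hY2 : MemLp Y 2 μ)
    (hP : ∀ j, MemLp (fun ω => P ω j) ∞ μ) (hMCAR : IndepFun (fun ω => (X ω, Y ω)) P μ)
    (θ : ι → ℝ) :
    ∫ ω, (Y ω - ∑ j, θ j * (P ω j * X ω j)) ^ 2 ∂μ
      = ∫ ω, (Y ω - ∑ j, (μ[fun ω => P ω j] * θ j) * X ω j) ^ 2 ∂μ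
        + ∫ ω, (fun j => θ j * X ω j) ⬝ᵥ
            (Matrix.of fun j k => cov[fun ω => P ω j, fun ω => P ω k; μ]) *ᵥ
              (fun j => θ j * X ω j) ∂μ := by
  set ρ : ι → ℝ := fun j => μ[fun ω => P ω j]
  set Z : Ω → ℝ := fun ω => Y ω - ∑ j, (ρ j * θ j) * X ω j
  set u : Ω → ι → ℝ := fun ω j => θ j * X ω j
  set D : Ω → ι → ℝ := fun ω j => P ω j - ρ j
  have hres : ∀ ω, Y ω - ∑ j, θ j * (P ω j * X ω j) = Z ω - D ω ⬝ᵥ u ω := fun ω => by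
    simp only [Z, D, u, dotProduct, sub_sub, ← Finset.sum_add_distrib]
    congr 1
    exact Finset.sum_congr rfl fun j _ => by ring
  have hind : IndepFun (fun ω => (Z ω, u ω)) D μ :=
    hMCAR.comp (φ := fun p : (ι → ℝ) × ℝ => (p.2 - ∑ j, (ρ j * θ j) * p.1 j, fun j => θ j * p.1 j))
      (ψ := fun (x : ι → ℝ) j => x j - ρ j) (by fun_prop) (by fun_prop)
  have hD0 : ∀ j, ∫ ω, D ω j ∂μ = 0 := fun j => by
    simp [D, ρ, integral_sub ((hP j).integrable le_top) (integrable_const _)]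
  simp_rw [hres]
  exact integral_sub_dotProduct_sq_of_indepFun hind
    (hY2.sub (memLp_finsetSum _ fun j _ => (hX2 j).const_mul _))
    (fun j => (hX2 j).const_mul _) (fun j => (hP j).sub (memLp_const _)) hD0

lemma iInf_eigenvalues_mul_integral_dotProduct_self_le [DecidableEq ι] {A : Matrix ι ι ℝ}
    (hA : A.IsHermitian) {u : Ω → ι → ℝ} (hu : ∀ j, MemLp (fun ω => u ω j) 2 μ) :
    (⨅ i, hA.eigenvalues i) * ∫ ω, u ω ⬝ᵥ u ω ∂μ ≤ ∫ ω, u ω ⬝ᵥ A *ᵥ u ω ∂μ := by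
  have huu : Integrable (fun ω => u ω ⬝ᵥ u ω) μ :=
    integrable_finsetSum _ fun j _ => (hu j).integrable_mul (hu j)
  rw [← integral_const_mul]
  exact integral_mono (huu.const_mul _) (integrable_dotProduct_mulVec A hu)
    fun ω => hA.iInf_eigenvalues_mul_dotProduct_self_le (u ω)

lemma sq_mul_sum_sq_le_integral_dotProduct_self {X : Ω → ι → ℝ}
    (hX2 : ∀ j, MemLp (fun ω => X ω j) 2 μ) {l : ℝ} (hmom : ∀ j, l ^ 2 ≤ ∫ ω, X ω j ^ 2 ∂μ)
    (θ : ι → ℝ) :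
    l ^ 2 * ∑ j, θ j ^ 2 ≤ ∫ ω, (fun j => θ j * X ω j) ⬝ᵥ (fun j => θ j * X ω j) ∂μ := by
  have hsq : ∀ ω, (fun j => θ j * X ω j) ⬝ᵥ (fun j => θ j * X ω j)
      = ∑ j, θ j ^ 2 * X ω j ^ 2 := fun ω =>
    Finset.sum_congr rfl fun j _ => by ring
  simp_rw [hsq]
  rw [integral_finsetSum _ fun j _ => (hX2 j).integrable_sq.const_mul _, Finset.mul_sum]
  refine Finset.sum_le_sum fun j _ => ?_
  rw [integral_const_mul, mul_comm]
  exact mul_le_mul_of_nonneg_left (hmom j) (sq_nonneg _)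

end

theorem stmt11_general {Ω : Type*} {mΩ : MeasurableSpace Ω} (μ : Measure Ω) [IsProbabilityMeasure μ]
    {d : ℕ} (X : Ω → Fin d → ℝ) (Y : Ω → ℝ) (P : Ω → Fin d → ℝ)
    (hPm : Measurable P)
    (hX2 : ∀ j, MemLp (fun ω => X ω j) 2 μ) (hY2 : MemLp Y 2 μ)
    (hP01 : ∀ ω j, P ω j = 0 ∨ P ω j = 1)
    (hMCAR : IndepFun (fun ω => (X ω, Y ω)) P μ)
    (l : ℝ) (hl : 0 < l) (hmom : ∀ j, l ^ 2 ≤ ∫ ω, X ω j ^ 2 ∂μ)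
    (V : Matrix (Fin d) (Fin d) ℝ)
    (hV : V = Matrix.of fun i j =>
      ∫ ω, P ω i * P ω j ∂μ - (∫ ω, P ω i ∂μ) * ∫ ω, P ω j ∂μ)
    (hVpd : V.PosDef)
    (Rimp R : (Fin d → ℝ) → ℝ)
    (hRimp : ∀ θ, Rimp θ = ∫ ω, (Y ω - ∑ j, θ j * (P ω j * X ω j)) ^ 2 ∂μ)
    (hR : ∀ θ, R θ = ∫ ω, (Y ω - ∑ j, θ j * X ω j) ^ 2 ∂μ)
    (θimp : Fin d → ℝ)
    (θs : Fin d → ℝ) (hθs : ∀ θ, R θs ≤ R θ) :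
    ∑ j, θimp j ^ 2 ≤ (Rimp θimp - R θs) / (l ^ 2 * ⨅ i, hVpd.1.eigenvalues i) := by
  rcases isEmpty_or_nonempty (Fin d) with _ | _
  · simp -- the empty infimum is `0` in `ℝ` and `x / 0 = 0`
  have hP : ∀ j, MemLp (fun ω => P ω j) ∞ μ := fun j =>
    memLp_top_of_bound ((measurable_pi_apply j).comp hPm).aestronglyMeasurable 1
      (ae_of_all _ fun ω => by rcases hP01 ω j with h | h <;> simp [h])
  have hVcov : V = Matrix.of fun j k => cov[fun ω => P ω j, fun ω => P ω k; μ] := by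
    ext j k
    rw [hV, of_apply, of_apply,
      covariance_eq_sub ((hP j).mono_exponent le_top) ((hP k).mono_exponent le_top)]
    rfl
  set u : Ω → Fin d → ℝ := fun ω j => θimp j * X ω j
  have hdecomp : Rimp θimp = R (fun j => μ[fun ω => P ω j] * θimp j)
      + ∫ ω, u ω ⬝ᵥ V *ᵥ u ω ∂μ := by
    rw [hRimp, hR, hVcov]
    exact integral_sq_sub_masked_eq hX2 hY2 hP hMCAR θimp
  have hspec := iInf_eigenvalues_mul_integral_dotProduct_self_le hVpd.1
    (u := u) fun j => (hX2 j).const_mul _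
  have hnorm := sq_mul_sum_sq_le_integral_dotProduct_self hX2 hmom θimp
  have hlam := hVpd.iInf_eigenvalues_pos
  rw [le_div_iff₀ (by positivity)]
  calc (∑ j, θimp j ^ 2) * (l ^ 2 * ⨅ i, hVpd.1.eigenvalues i)
      = (⨅ i, hVpd.1.eigenvalues i) * (l ^ 2 * ∑ j, θimp j ^ 2) := by ring
    _ ≤ (⨅ i, hVpd.1.eigenvalues i) * ∫ ω, u ω ⬝ᵥ u ω ∂μ := mul_le_mul_of_nonneg_left hnorm hlam.le
    _ ≤ ∫ ω, u ω ⬝ᵥ V *ᵥ u ω ∂μ := hspec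
    _ ≤ Rimp θimp - R θs := by
        linarith [hdecomp, hθs fun j => μ[fun ω => P ω j] * θimp j]

theorem stmt11 {Ω : Type*} {mΩ : MeasurableSpace Ω} (μ : Measure Ω) [IsProbabilityMeasure μ]
    {d : ℕ} (X : Ω → Fin d → ℝ) (Y : Ω → ℝ) (P : Ω → Fin d → ℝ)
    (hXm : Measurable X) (hYm : Measurable Y) (hPm : Measurable P)
    (hX2 : ∀ j, MemLp (fun ω => X ω j) 2 μ) (hY2 : MemLp Y 2 μ)
    (hP01 : ∀ ω j, P ω j = 0 ∨ P ω j = 1)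
    (hMCAR : IndepFun (fun ω => (X ω, Y ω)) P μ)
    (l : ℝ) (hl : 0 < l) (hmom : ∀ j, l ^ 2 ≤ ∫ ω, X ω j ^ 2 ∂μ)
    (V : Matrix (Fin d) (Fin d) ℝ)
    (hV : V = Matrix.of fun i j =>
      ∫ ω, P ω i * P ω j ∂μ - (∫ ω, P ω i ∂μ) * ∫ ω, P ω j ∂μ)
    (hVpd : V.PosDef)
    (Rimp R : (Fin d → ℝ) → ℝ)
    (hRimp : ∀ θ, Rimp θ = ∫ ω, (Y ω - ∑ j, θ j * (P ω j * X ω j)) ^ 2 ∂μ)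
    (hR : ∀ θ, R θ = ∫ ω, (Y ω - ∑ j, θ j * X ω j) ^ 2 ∂μ)
    (θimp : Fin d → ℝ) (hθimp : ∀ θ, Rimp θimp ≤ Rimp θ)
    (θs : Fin d → ℝ) (hθs : ∀ θ, R θs ≤ R θ) :
    ∑ j, θimp j ^ 2 ≤ (Rimp θimp - R θs) / (l ^ 2 * ⨅ i, hVpd.1.eigenvalues i) :=
  stmt11_general (mΩ := mΩ) μ X Y P hPm hX2 hY2 hP01 hMCAR l hl hmom V hV hVpd Rimp R hRimp hR θimp
    θs hθs
end

section
/- Under the general MCAR assumption ((X,Y) ⟂⟂ P) with E[X_j²] ≤ L² for all j, the zero-imputation bias satisfies B_imp ≤ B_ridge,Λ with Λ = L² λ_max(C), where C_{kj} = Cov(P_k,P_j)/(ρ_k ρ_j), ρ_j = P(P_j=1) > 0, and B_ridge,Λ = inf_θ { R(θ) + Λ‖θ‖₂² } − inf_θ R(θ). -/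
/-!
Use `θ j / ρ j` on the zero-imputed features, for an arbitrary full-data predictor `θ`. With
`D j = (P j - ρ j) / ρ j`, the residual becomes `(Y - θᵀX) - ∑ j, θ j X j D j`, where `D` is
centred, has covariance matrix `C` and is independent of `(X, Y)`. The cross term therefore
vanishes, and `R_imp (θ / ρ) - R θ = E[(θ ⊙ X)ᵀ C (θ ⊙ X)] ≤ λ_max(C) ∑ j, θ_j² E[X_j²]`, which
is at most `L² λ_max(C) ‖θ‖²`. Taking infima over `θ` gives the bound.
-/

open MeasureTheory ProbabilityTheory Matrix

namespace Matrix.IsHermitian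

open scoped ComplexOrder

variable {𝕜 n : Type*} [RCLike 𝕜] [Fintype n] [DecidableEq n] {A : Matrix n n 𝕜}

theorem dotProduct_mulVec_le_iSup_eigenvalues_smul (hA : A.IsHermitian) (v : n → 𝕜) :
    star v ⬝ᵥ A *ᵥ v ≤ (⨆ i, hA.eigenvalues i) • (star v ⬝ᵥ v) := by
  set Λ := ⨆ i, hA.eigenvalues i
  set U : Matrix n n 𝕜 := (hA.eigenvectorUnitary : Matrix n n 𝕜)
  have hΛ : ∀ i, hA.eigenvalues i ≤ Λ := le_ciSup (Set.finite_range _).bddAbove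
  have hgap : (U * diagonal (fun i => ((Λ - hA.eigenvalues i : ℝ) : 𝕜)) * Uᴴ).PosSemidef :=
    (PosSemidef.diagonal fun i => RCLike.ofReal_nonneg.2 (sub_nonneg.2 (hΛ i))
      ).mul_mul_conjTranspose_same U
  have hgap_eq : U * diagonal (fun i => ((Λ - hA.eigenvalues i : ℝ) : 𝕜)) * Uᴴ = Λ • 1 - A := by
    have hdiag : diagonal (fun i => ((Λ - hA.eigenvalues i : ℝ) : 𝕜))
        = Λ • 1 - diagonal (RCLike.ofReal ∘ hA.eigenvalues) := by
      ext i j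
      by_cases h : i = j <;> simp [h, RCLike.real_smul_eq_coe_mul]
    conv_rhs => rw [hA.spectral_theorem]
    rw [hdiag, mul_sub, sub_mul, mul_smul_comm, smul_mul_assoc, mul_one,
      Unitary.conjStarAlgAut_apply, ← star_eq_conjTranspose,
      mem_unitaryGroup_iff.mp hA.eigenvectorUnitary.2]
  have hgap_nonneg := hgap.dotProduct_mulVec_nonneg v
  rwa [hgap_eq, sub_mulVec, dotProduct_sub, smul_mulVec, one_mulVec, dotProduct_smul,
    sub_nonneg] at hgap_nonneg

theorem re_apply_self_le_iSup_eigenvalues (hA : A.IsHermitian) (i : n) :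
    RCLike.re (A i i) ≤ ⨆ k, hA.eigenvalues k := by
  have h := hA.dotProduct_mulVec_le_iSup_eigenvalues_smul (Pi.single i 1)
  simpa [RCLike.smul_re] using (RCLike.le_iff_re_im.1 h).1

theorem iSup_eigenvalues_nonneg_of_forall_re_apply_self_nonneg (hA : A.IsHermitian)
    (hdiag : ∀ i, 0 ≤ RCLike.re (A i i)) : 0 ≤ ⨆ i, hA.eigenvalues i := by
  rcases isEmpty_or_nonempty n with _ | ⟨⟨i⟩⟩
  · simp [Real.iSup_of_isEmpty]
  · exact (hdiag i).trans (hA.re_apply_self_le_iSup_eigenvalues i)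

end Matrix.IsHermitian

section

variable {Ω ι : Type*} {mΩ : MeasurableSpace Ω} {μ : Measure Ω} [Fintype ι]

theorem integral_eq_measureReal_of_forall_eq_zero_or_eq_one {f : Ω → ℝ} (hf : Measurable f)
    (h01 : ∀ ω, f ω = 0 ∨ f ω = 1) : ∫ ω, f ω ∂μ = μ.real {ω | f ω = 1} := by
  have hind : f = {ω | f ω = 1}.indicator 1 := by
    ext ω
    rcases h01 ω with h | h <;> simp [h]
  conv_lhs => rw [hind]
  exact integral_indicator_one (hf (measurableSet_singleton 1))

theorem memLp_of_forall_eq_zero_or_eq_one [IsFiniteMeasure μ] {f : Ω → ℝ}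
    (hf : AEStronglyMeasurable f μ) (h01 : ∀ ω, f ω = 0 ∨ f ω = 1) (p : ENNReal) :
    MemLp f p μ :=
  MemLp.of_bound hf 1 (ae_of_all _ fun ω => by rcases h01 ω with h | h <;> simp [h])

theorem sum_mul_integral_mul_le_iSup_eigenvalues_mul [DecidableEq ι] {C : Matrix ι ι ℝ}
    (hC : C.IsHermitian) {V : Ω → ι → ℝ} (hV : ∀ j, MemLp (fun ω => V ω j) 2 μ) :
    ∑ k, ∑ j, C k j * ∫ ω, V ω k * V ω j ∂μ ≤
      (⨆ i, hC.eigenvalues i) * ∑ j, ∫ ω, V ω j ^ 2 ∂μ := by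
  have hint : ∀ k j, Integrable (fun ω => C k j * (V ω k * V ω j)) μ := fun k j =>
    ((hV k).integrable_mul (hV j)).const_mul _
  have hquad : ∀ v : ι → ℝ, ∑ k, ∑ j, C k j * (v k * v j) = v ⬝ᵥ C *ᵥ v := fun v => by
    simp only [dotProduct, mulVec, Finset.mul_sum]
    exact Finset.sum_congr rfl fun k _ => Finset.sum_congr rfl fun j _ => by ring
  calc ∑ k, ∑ j, C k j * ∫ ω, V ω k * V ω j ∂μ
      = ∫ ω, ∑ k, ∑ j, C k j * (V ω k * V ω j) ∂μ := by
        rw [integral_finsetSum _ fun k _ => integrable_finsetSum _ fun j _ => hint k j]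
        simp_rw [integral_finsetSum _ fun j _ => hint _ j, integral_const_mul]
    _ ≤ ∫ ω, (⨆ i, hC.eigenvalues i) * ∑ j, V ω j ^ 2 ∂μ := by
        refine integral_mono
          (integrable_finsetSum _ fun k _ => integrable_finsetSum _ fun j _ => hint k j)
          ((integrable_finsetSum _ fun j _ => (hV j).integrable_sq).const_mul _) fun ω => ?_
        simpa [hquad, dotProduct, sq] using hC.dotProduct_mulVec_le_iSup_eigenvalues_smul (V ω)
    _ = (⨆ i, hC.eigenvalues i) * ∑ j, ∫ ω, V ω j ^ 2 ∂μ := by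
        rw [integral_const_mul, integral_finsetSum _ fun j _ => (hV j).integrable_sq]

theorem integral_sq_sub_sum_mul_of_indepFun [IsFiniteMeasure μ] {A : Ω → ℝ} {V D : Ω → ι → ℝ}
    (hind : IndepFun (fun ω => (A ω, V ω)) D μ) (hA : MemLp A 2 μ)
    (hV : ∀ j, MemLp (fun ω => V ω j) 2 μ) (hD : ∀ j, MemLp (fun ω => D ω j) 2 μ)
    (hD0 : ∀ j, ∫ ω, D ω j ∂μ = 0) :
    ∫ ω, (A ω - ∑ j, V ω j * D ω j) ^ 2 ∂μ =
      ∫ ω, A ω ^ 2 ∂μ + ∑ k, ∑ j, (∫ ω, D ω k * D ω j ∂μ) * ∫ ω, V ω k * V ω j ∂μ := by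
  have hind_cross : ∀ j, IndepFun (fun ω => A ω * V ω j) (fun ω => D ω j) μ := fun j =>
    hind.comp (φ := fun p : ℝ × (ι → ℝ) => p.1 * p.2 j) (ψ := fun q : ι → ℝ => q j)
      (by fun_prop) (by fun_prop)
  have hind_quad : ∀ k j, IndepFun (fun ω => V ω k * V ω j) (fun ω => D ω k * D ω j) μ :=
    fun k j => hind.comp (φ := fun p : ℝ × (ι → ℝ) => p.2 k * p.2 j)
      (ψ := fun q : ι → ℝ => q k * q j) (by fun_prop) (by fun_prop)
  have hint_cross : ∀ j, Integrable (fun ω => A ω * V ω j * D ω j) μ := fun j =>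
    (hind_cross j).integrable_mul (hA.integrable_mul (hV j)) ((hD j).integrable one_le_two)
  have hint_quad : ∀ k j, Integrable (fun ω => V ω k * V ω j * (D ω k * D ω j)) μ :=
    fun k j => (hind_quad k j).integrable_mul ((hV k).integrable_mul (hV j))
      ((hD k).integrable_mul (hD j))
  have hcross : ∀ j, ∫ ω, A ω * V ω j * D ω j ∂μ = 0 := fun j => by
    rw [(hind_cross j).integral_fun_mul_eq_mul_integral (hA.1.mul (hV j).1) (hD j).1, hD0,
      mul_zero]
  have hquad : ∀ k j, ∫ ω, V ω k * V ω j * (D ω k * D ω j) ∂μ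
      = (∫ ω, D ω k * D ω j ∂μ) * ∫ ω, V ω k * V ω j ∂μ := fun k j => by
    rw [(hind_quad k j).integral_fun_mul_eq_mul_integral ((hV k).1.mul (hV j).1)
      ((hD k).1.mul (hD j).1), mul_comm]
  have hexpand : ∀ ω, (A ω - ∑ j, V ω j * D ω j) ^ 2 = A ω ^ 2 - 2 * ∑ j, A ω * V ω j * D ω j
      + ∑ k, ∑ j, V ω k * V ω j * (D ω k * D ω j) := fun ω => by
    rw [sub_sq, sq (∑ j, _), Finset.sum_mul_sum, Finset.mul_sum, Finset.mul_sum]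
    simp only [mul_assoc, mul_left_comm]
  have hint_sum_cross : Integrable (fun ω => 2 * ∑ j, A ω * V ω j * D ω j) μ :=
    (integrable_finsetSum _ fun j _ => hint_cross j).const_mul 2
  have hint_diff : Integrable (fun ω => A ω ^ 2 - 2 * ∑ j, A ω * V ω j * D ω j) μ :=
    hA.integrable_sq.sub hint_sum_cross
  simp_rw [hexpand]
  rw [integral_add hint_diff
      (integrable_finsetSum _ fun k _ => integrable_finsetSum _ fun j _ => hint_quad k j),
    integral_sub hA.integrable_sq hint_sum_cross, integral_const_mul,
    integral_finsetSum _ fun j _ => hint_cross j,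
    integral_finsetSum _ fun k _ => integrable_finsetSum _ fun j _ => hint_quad k j]
  simp_rw [integral_finsetSum _ fun j _ => hint_quad _ j]
  simp only [hcross, hquad, Finset.sum_const_zero, mul_zero, sub_zero]

variable {X : Ω → ι → ℝ} {Y : Ω → ℝ} {P : Ω → ι → ℝ} {ρ : ι → ℝ}

theorem integral_sq_sub_sum_div_mul_eq_add_sum_covariance [IsProbabilityMeasure μ]
    (hX2 : ∀ j, MemLp (fun ω => X ω j) 2 μ) (hY2 : MemLp Y 2 μ)
    (hP2 : ∀ j, MemLp (fun ω => P ω j) 2 μ) (hMCAR : IndepFun (fun ω => (X ω, Y ω)) P μ)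
    (hPmean : ∀ j, ∫ ω, P ω j ∂μ = ρ j) (hρ : ∀ j, ρ j ≠ 0) (θ : ι → ℝ) :
    ∫ ω, (Y ω - ∑ j, θ j / ρ j * (P ω j * X ω j)) ^ 2 ∂μ =
      ∫ ω, (Y ω - ∑ j, θ j * X ω j) ^ 2 ∂μ +
        ∑ k, ∑ j, cov[fun ω => P ω k, fun ω => P ω j; μ] / (ρ k * ρ j) *
          ∫ ω, θ k * X ω k * (θ j * X ω j) ∂μ := by
  set D : Ω → ι → ℝ := fun ω j => (P ω j - ρ j) / ρ j
  have hind : IndepFun (fun ω => (Y ω - ∑ j, θ j * X ω j, fun j => θ j * X ω j)) D μ :=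
    hMCAR.comp (φ := fun z : (ι → ℝ) × ℝ => (z.2 - ∑ j, θ j * z.1 j, fun j => θ j * z.1 j))
      (ψ := fun (p : ι → ℝ) j => (p j - ρ j) / ρ j) (by fun_prop) (by fun_prop)
  have hsplit : ∀ ω, Y ω - ∑ j, θ j / ρ j * (P ω j * X ω j)
      = (Y ω - ∑ j, θ j * X ω j) - ∑ j, θ j * X ω j * D ω j := fun ω => by
    rw [sub_sub, ← Finset.sum_add_distrib]
    refine congrArg _ (Finset.sum_congr rfl fun j _ => ?_)
    simp only [D]
    field_simp [hρ j]
    ring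
  have hD2 : ∀ j, MemLp (fun ω => D ω j) 2 μ := fun j => by
    simpa only [D, div_eq_mul_inv, Pi.sub_apply] using
      ((hP2 j).sub (memLp_const (ρ j))).mul_const (ρ j)⁻¹
  have hD0 : ∀ j, ∫ ω, D ω j ∂μ = 0 := fun j => by
    simp only [D, integral_div, integral_sub ((hP2 j).integrable one_le_two) (integrable_const _),
      hPmean, integral_const, probReal_univ, one_smul, sub_self, zero_div]
  have hDcov : ∀ k j, ∫ ω, D ω k * D ω j ∂μ =
      cov[fun ω => P ω k, fun ω => P ω j; μ] / (ρ k * ρ j) := fun k j => by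
    simp only [D, covariance, hPmean, div_mul_div_comm, integral_div]
  simp_rw [hsplit]
  rw [integral_sq_sub_sum_mul_of_indepFun hind
    (hY2.sub (memLp_finsetSum _ fun j _ => (hX2 j).const_mul _))
    (fun j => (hX2 j).const_mul _) hD2 hD0]
  simp only [hDcov]

theorem integral_sq_sub_sum_div_mul_le_add_mul_sum_sq [IsProbabilityMeasure μ] [DecidableEq ι]
    (hX2 : ∀ j, MemLp (fun ω => X ω j) 2 μ) (hY2 : MemLp Y 2 μ)
    (hP2 : ∀ j, MemLp (fun ω => P ω j) 2 μ) (hMCAR : IndepFun (fun ω => (X ω, Y ω)) P μ)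
    (hPmean : ∀ j, ∫ ω, P ω j ∂μ = ρ j) (hρ : ∀ j, ρ j ≠ 0) {C : Matrix ι ι ℝ}
    (hC : ∀ k j, C k j = cov[fun ω => P ω k, fun ω => P ω j; μ] / (ρ k * ρ j))
    (hCh : C.IsHermitian) {L : ℝ} (hL : ∀ j, ∫ ω, X ω j ^ 2 ∂μ ≤ L ^ 2) (θ : ι → ℝ) :
    ∫ ω, (Y ω - ∑ j, θ j / ρ j * (P ω j * X ω j)) ^ 2 ∂μ ≤
      ∫ ω, (Y ω - ∑ j, θ j * X ω j) ^ 2 ∂μ +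
        (L ^ 2 * ⨆ i, hCh.eigenvalues i) * ∑ j, θ j ^ 2 := by
  set Λ := ⨆ i, hCh.eigenvalues i
  have hΛ : 0 ≤ Λ := hCh.iSup_eigenvalues_nonneg_of_forall_re_apply_self_nonneg fun j => by
    rw [RCLike.re_to_real, hC, covariance_self (hP2 j).aestronglyMeasurable.aemeasurable]
    exact div_nonneg (variance_nonneg _ _) (mul_self_nonneg _)
  have hmoment : ∑ j, ∫ ω, (θ j * X ω j) ^ 2 ∂μ ≤ L ^ 2 * ∑ j, θ j ^ 2 := by
    rw [Finset.mul_sum]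
    refine Finset.sum_le_sum fun j _ => ?_
    simp_rw [mul_pow, integral_const_mul]
    nlinarith [hL j, sq_nonneg (θ j)]
  calc ∫ ω, (Y ω - ∑ j, θ j / ρ j * (P ω j * X ω j)) ^ 2 ∂μ
      = ∫ ω, (Y ω - ∑ j, θ j * X ω j) ^ 2 ∂μ +
          ∑ k, ∑ j, C k j * ∫ ω, θ k * X ω k * (θ j * X ω j) ∂μ := by
        simp only [hC]
        exact integral_sq_sub_sum_div_mul_eq_add_sum_covariance hX2 hY2 hP2 hMCAR hPmean hρ θ
    _ ≤ ∫ ω, (Y ω - ∑ j, θ j * X ω j) ^ 2 ∂μ + Λ * ∑ j, ∫ ω, (θ j * X ω j) ^ 2 ∂μ := by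
        gcongr
        exact sum_mul_integral_mul_le_iSup_eigenvalues_mul hCh fun j => (hX2 j).const_mul _
    _ ≤ ∫ ω, (Y ω - ∑ j, θ j * X ω j) ^ 2 ∂μ + (L ^ 2 * Λ) * ∑ j, θ j ^ 2 := by
        nlinarith [mul_le_mul_of_nonneg_left hmoment hΛ]

end

theorem stmt12_general {Ω : Type*} {mΩ : MeasurableSpace Ω} (μ : Measure Ω) [IsProbabilityMeasure μ]
    {d : ℕ} (X : Ω → Fin d → ℝ) (Y : Ω → ℝ) (P : Ω → Fin d → ℝ)
    (hPm : Measurable P)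
    (hX2 : ∀ j, MemLp (fun ω => X ω j) 2 μ) (hY2 : MemLp Y 2 μ)
    (hP01 : ∀ ω j, P ω j = 0 ∨ P ω j = 1)
    (hMCAR : IndepFun (fun ω => (X ω, Y ω)) P μ)
    (L : ℝ) (hL : ∀ j, ∫ ω, X ω j ^ 2 ∂μ ≤ L ^ 2)
    (ρ : Fin d → ℝ) (hρdef : ∀ j, ρ j = (μ {ω | P ω j = 1}).toReal)
    (hρpos : ∀ j, 0 < ρ j)
    (C : Matrix (Fin d) (Fin d) ℝ)
    (hC : C = Matrix.of fun k j =>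
      (∫ ω, P ω k * P ω j ∂μ - ρ k * ρ j) / (ρ k * ρ j))
    (hCh : C.IsHermitian)
    (Rimp R : (Fin d → ℝ) → ℝ)
    (hRimp : ∀ θ, Rimp θ = ∫ ω, (Y ω - ∑ j, θ j * (P ω j * X ω j)) ^ 2 ∂μ)
    (hR : ∀ θ, R θ = ∫ ω, (Y ω - ∑ j, θ j * X ω j) ^ 2 ∂μ) :
    (⨅ θ : Fin d → ℝ, Rimp θ) - (⨅ θ : Fin d → ℝ, R θ) ≤
      (⨅ θ : Fin d → ℝ, (R θ + (L ^ 2 * ⨆ i, hCh.eigenvalues i) * ∑ j, θ j ^ 2)) -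
        (⨅ θ : Fin d → ℝ, R θ) := by
  have hPj : ∀ j, Measurable fun ω => P ω j := fun j => (measurable_pi_apply j).comp hPm
  have hP2 : ∀ j, MemLp (fun ω => P ω j) 2 μ := fun j =>
    memLp_of_forall_eq_zero_or_eq_one (hPj j).aestronglyMeasurable (hP01 · j) 2
  have hPmean : ∀ j, ∫ ω, P ω j ∂μ = ρ j := fun j => by
    rw [integral_eq_measureReal_of_forall_eq_zero_or_eq_one (hPj j) (hP01 · j), hρdef,
      measureReal_def]
  have hC_cov : ∀ k j, C k j = cov[fun ω => P ω k, fun ω => P ω j; μ] / (ρ k * ρ j) :=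
    fun k j => by rw [hC, covariance_eq_sub (hP2 k) (hP2 j), hPmean, hPmean]; rfl
  have hRimp_bdd : BddBelow (Set.range Rimp) := ⟨0, by
    rintro _ ⟨θ, rfl⟩
    rw [hRimp]
    exact integral_nonneg fun ω => sq_nonneg _⟩
  refine sub_le_sub_right (le_ciInf fun θ => (ciInf_le hRimp_bdd fun j => θ j / ρ j).trans ?_) _
  rw [hRimp, hR]
  exact integral_sq_sub_sum_div_mul_le_add_mul_sum_sq hX2 hY2 hP2 hMCAR hPmean
    (fun j => (hρpos j).ne') hC_cov hCh hL θ

theorem stmt12 {Ω : Type*} {mΩ : MeasurableSpace Ω} (μ : Measure Ω) [IsProbabilityMeasure μ]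
    {d : ℕ} (X : Ω → Fin d → ℝ) (Y : Ω → ℝ) (P : Ω → Fin d → ℝ)
    (hXm : Measurable X) (hYm : Measurable Y) (hPm : Measurable P)
    (hX2 : ∀ j, MemLp (fun ω => X ω j) 2 μ) (hY2 : MemLp Y 2 μ)
    (hP01 : ∀ ω j, P ω j = 0 ∨ P ω j = 1)
    (hMCAR : IndepFun (fun ω => (X ω, Y ω)) P μ)
    (L : ℝ) (hL : ∀ j, ∫ ω, X ω j ^ 2 ∂μ ≤ L ^ 2)
    (ρ : Fin d → ℝ) (hρdef : ∀ j, ρ j = (μ {ω | P ω j = 1}).toReal)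
    (hρpos : ∀ j, 0 < ρ j)
    (C : Matrix (Fin d) (Fin d) ℝ)
    (hC : C = Matrix.of fun k j =>
      (∫ ω, P ω k * P ω j ∂μ - ρ k * ρ j) / (ρ k * ρ j))
    (hCh : C.IsHermitian)
    (Rimp R : (Fin d → ℝ) → ℝ)
    (hRimp : ∀ θ, Rimp θ = ∫ ω, (Y ω - ∑ j, θ j * (P ω j * X ω j)) ^ 2 ∂μ)
    (hR : ∀ θ, R θ = ∫ ω, (Y ω - ∑ j, θ j * X ω j) ^ 2 ∂μ) :
    (⨅ θ : Fin d → ℝ, Rimp θ) - (⨅ θ : Fin d → ℝ, R θ) ≤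
      (⨅ θ : Fin d → ℝ, (R θ + (L ^ 2 * ⨆ i, hCh.eigenvalues i) * ∑ j, θ j ^ 2)) -
        (⨅ θ : Fin d → ℝ, R θ) :=
  stmt12_general (mΩ := mΩ) μ X Y P hPm hX2 hY2 hP01 hMCAR L hL ρ hρdef hρpos C hC hCh Rimp R hRimp
    hR
end
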